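/- Let n be even, q = 2^n, let α ∈ F_q be a primitive (q−1)-th root of unity, and let θ be the automorphism of F_q with θ(α) = α² (the Frobenius). Let C be the θ-cyclic code of length n over F_q with generator polynomial G ∈ F_q[X;θ], where G is a right divisor of X^n − 1 in F_q[X;θ], and suppose that X − α^k is a right divisor of G in F_q[X;θ] for every k ∈ {1, ..., d−1}, where 2 ≤ d ≤ n+1. Then the minimum Hamming distance of C is at least d; that is, every nonzero codeword of C has Hamming weight at least d. -/

import Mathlib

/-!
Skew polynomial rings `F[X;θ]` of automorphism type: the additive group of
polynomials `∑ aᵢ Xⁱ` with coefficients written on the left, with multiplication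
determined by the rule `X * a = θ(a) * X`.
-/

noncomputable section

/-- The skew polynomial ring `F[X;θ]`: formal polynomials `∑ aᵢ Xⁱ` (represented by
their finitely supported coefficient functions) with the usual addition and with
multiplication twisted by the automorphism `θ`, so that `X * a = θ(a) * X`. -/
def SkewPoly (F : Type*) [Ring F] (_θ : RingAut F) : Type _ := ℕ →₀ F

namespace SkewPoly

variable {F : Type*} [Ring F] (θ : RingAut F)

instance : AddCommGroup (SkewPoly F θ) := inferInstanceAs (AddCommGroup (ℕ →₀ F))

private theorem aut_one_apply (x : F) : (1 : RingAut F) x = x := rfl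
private theorem aut_mul_apply (f g : RingAut F) (x : F) : (f * g) x = f (g x) := rfl

/-- The skew (twisted) convolution product on coefficient functions:
`(∑ aᵢ Xⁱ) * (∑ bⱼ Xʲ) = ∑_{i,j} aᵢ θⁱ(bⱼ) X^{i+j}`. -/
def mulF (p q : ℕ →₀ F) : ℕ →₀ F :=
  p.sum fun i a => q.sum fun j b => Finsupp.single (i + j) (a * (θ ^ i) b)

instance : Mul (SkewPoly F θ) := ⟨fun p q => mulF θ p q⟩

instance : One (SkewPoly F θ) := ⟨(Finsupp.single 0 1 : ℕ →₀ F)⟩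

theorem mul_def (p q : SkewPoly F θ) :
    p * q = Finsupp.sum (α := ℕ) (M := F) p
      (fun i a => Finsupp.sum (α := ℕ) (M := F) q
        (fun j b => Finsupp.single (i + j) (a * (θ ^ i) b))) := rfl

private theorem zero_mulF (q : ℕ →₀ F) : mulF θ 0 q = 0 := by
  simp [mulF]

private theorem mulF_zero (p : ℕ →₀ F) : mulF θ p 0 = 0 := by
  simp [mulF]

private theorem add_mulF (p p' q : ℕ →₀ F) :
    mulF θ (p + p') q = mulF θ p q + mulF θ p' q := by
  unfold mulF
  rw [Finsupp.sum_add_index] <;> simp [add_mul, Finsupp.sum_add]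

private theorem mulF_add (p q q' : ℕ →₀ F) :
    mulF θ p (q + q') = mulF θ p q + mulF θ p q' := by
  unfold mulF
  rw [← Finsupp.sum_add]
  refine Finsupp.sum_congr fun i _ => ?_
  rw [Finsupp.sum_add_index] <;> simp [mul_add]

private theorem single_mulF (i : ℕ) (a : F) (q : ℕ →₀ F) :
    mulF θ (Finsupp.single i a) q
      = q.sum fun j b => Finsupp.single (i + j) (a * (θ ^ i) b) := by
  unfold mulF
  rw [Finsupp.sum_single_index]
  simp

private theorem single_mulF_single (i j : ℕ) (a b : F) :
    mulF θ (Finsupp.single i a) (Finsupp.single j b)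
      = Finsupp.single (i + j) (a * (θ ^ i) b) := by
  rw [single_mulF, Finsupp.sum_single_index]
  simp

private theorem mulF_assoc_sss (i j k : ℕ) (a b c : F) :
    mulF θ (mulF θ (Finsupp.single i a) (Finsupp.single j b)) (Finsupp.single k c)
      = mulF θ (Finsupp.single i a) (mulF θ (Finsupp.single j b) (Finsupp.single k c)) := by
  simp only [single_mulF_single]
  rw [add_assoc, pow_add]
  simp [mul_assoc, aut_mul_apply]

private theorem mulF_assoc_ss (i j : ℕ) (a b : F) (r : ℕ →₀ F) :
    mulF θ (mulF θ (Finsupp.single i a) (Finsupp.single j b)) r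
      = mulF θ (Finsupp.single i a) (mulF θ (Finsupp.single j b) r) := by
  induction r using Finsupp.induction with
  | zero => simp [mulF_zero]
  | single_add k c r _ _ ih =>
      rw [mulF_add, mulF_add, mulF_add, ih, mulF_assoc_sss]

private theorem mulF_assoc_s (i : ℕ) (a : F) (q r : ℕ →₀ F) :
    mulF θ (mulF θ (Finsupp.single i a) q) r
      = mulF θ (Finsupp.single i a) (mulF θ q r) := by
  induction q using Finsupp.induction with
  | zero => simp [mulF_zero, zero_mulF]
  | single_add j b q _ _ ih =>
      rw [mulF_add, add_mulF, add_mulF, mulF_add, ih, mulF_assoc_ss]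

private theorem mulF_assoc (p q r : ℕ →₀ F) :
    mulF θ (mulF θ p q) r = mulF θ p (mulF θ q r) := by
  induction p using Finsupp.induction with
  | zero => simp [zero_mulF]
  | single_add i a p _ _ ih =>
      rw [add_mulF, add_mulF, add_mulF, ih, mulF_assoc_s]

instance instRing : Ring (SkewPoly F θ) :=
  { (inferInstance : AddCommGroup (ℕ →₀ F)), (inferInstance : Mul (SkewPoly F θ)),
    (inferInstance : One (SkewPoly F θ)) with
    mul_assoc := fun p q r => mulF_assoc θ p q r
    one_mul := fun p => by
      show mulF θ (Finsupp.single 0 1) (show ℕ →₀ F from p) = p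
      rw [single_mulF]
      refine (Finsupp.sum_congr fun i a => ?_).trans (Finsupp.sum_single p)
      simp [aut_one_apply]
    mul_one := fun p => by
      show mulF θ p (Finsupp.single 0 1) = p
      unfold mulF
      refine (Finsupp.sum_congr fun i a => ?_).trans (Finsupp.sum_single p)
      rw [Finsupp.sum_single_index] <;> simp
    left_distrib := fun p q r => mulF_add θ p q r
    right_distrib := fun p q r => add_mulF θ p q r
    zero_mul := fun p => zero_mulF θ p
    mul_zero := fun p => mulF_zero θ p }

/-- The constant (degree-zero) embedding `F → F[X;θ]`, as a ring homomorphism. -/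
def C : F →+* SkewPoly F θ where
  toFun a := (Finsupp.single 0 a : ℕ →₀ F)
  map_one' := rfl
  map_mul' a b := by
    show _ = mulF θ _ _
    rw [single_mulF_single]
    simp [aut_one_apply]
  map_zero' := by
    show (Finsupp.single 0 (0 : F) : ℕ →₀ F) = 0
    simp
  map_add' a b := by
    show (Finsupp.single 0 (a + b) : ℕ →₀ F) = Finsupp.single 0 a + Finsupp.single 0 b
    exact Finsupp.single_add _ _ _

/-- The indeterminate `X` of the skew polynomial ring. -/
def X : SkewPoly F θ := (Finsupp.single 1 1 : ℕ →₀ F)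

/-- The `i`-th coefficient of a skew polynomial. -/
def coeff (p : SkewPoly F θ) (i : ℕ) : F := (show ℕ →₀ F from p) i

/-- Sanity check: the fundamental commutation rule `X * a = θ(a) * X`. -/
theorem X_mul_C (a : F) : X θ * C θ a = C θ (θ a) * X θ := by
  show mulF θ (Finsupp.single 1 1) (Finsupp.single 0 a)
      = mulF θ (Finsupp.single 0 (θ a)) (Finsupp.single 1 1)
  rw [single_mulF_single, single_mulF_single]
  simp [aut_one_apply, pow_one]

end SkewPoly

/-- The congruence on `F[X;θ]` identifying two skew polynomials iff they differ by an
element of the two-sided ideal generated by `Xⁿ - 1`; its quotient ring is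
`F[X;θ]/(Xⁿ - 1)`, and `(skewCyclicCon F θ n).mk'` is the canonical projection `ψ`. -/
def skewCyclicCon (F : Type*) [Ring F] (θ : RingAut F) (n : ℕ) :
    RingCon (SkewPoly F θ) :=
  (TwoSidedIdeal.span {SkewPoly.X θ ^ n - 1}).ringCon

/-- The skew polynomial representation `a(X) = a₀ + a₁ X + ⋯ + a_{n-1} X^{n-1}` of a
word `a = (a₀, …, a_{n-1}) ∈ F^n`. -/
def wordPoly {F : Type*} [Ring F] (θ : RingAut F) {n : ℕ} (a : Fin n → F) :
    SkewPoly F θ :=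
  ∑ i : Fin n, SkewPoly.C θ (a i) * SkewPoly.X θ ^ (i : ℕ)


namespace SkewBCHAux

open SkewPoly

variable {F : Type*} [Field F] (θ : RingAut F)

/-- degree-`i` monomial with coefficient `c`, as a skew polynomial -/
def sgl (i : ℕ) (c : F) : SkewPoly F θ := Finsupp.single i c

theorem mul_sgl (i j : ℕ) (a b : F) :
    sgl θ i a * sgl θ j b = sgl θ (i + j) (a * (θ ^ i) b) := by
  rw [SkewPoly.mul_def]
  unfold sgl
  rw [Finsupp.sum_single_index, Finsupp.sum_single_index]
  · simp
  · rw [Finsupp.sum_single_index] <;> simp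

theorem one_eq : (1 : SkewPoly F θ) = sgl θ 0 1 := rfl
theorem X_eq : SkewPoly.X θ = sgl θ 1 1 := rfl
theorem C_eq (c : F) : SkewPoly.C θ c = sgl θ 0 c := rfl

theorem X_pow (k : ℕ) : (SkewPoly.X θ) ^ k = sgl θ k 1 := by
  induction k with
  | zero => rw [pow_zero, one_eq]
  | succ k ih => rw [pow_succ, ih, X_eq, mul_sgl]; simp

theorem C_mul_X_pow (c : F) (k : ℕ) :
    SkewPoly.C θ c * (SkewPoly.X θ) ^ k = sgl θ k c := by
  rw [X_pow, C_eq, mul_sgl]; simp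

/-- skew "evaluation": the remainder of right division by `X - C β`. -/
def ev (β : F) : SkewPoly F θ →+ F :=
  AddMonoidHom.mk' (fun p => Finsupp.sum (α := ℕ) (M := F) p
      (fun i c => c * ∏ j ∈ Finset.range i, (θ ^ j) β))
    (fun p q => Finsupp.sum_add_index' (fun i => by simp) (fun i b₁ b₂ => add_mul b₁ b₂ _))

theorem ev_sgl (β : F) (i : ℕ) (c : F) :
    ev θ β (sgl θ i c) = c * ∏ j ∈ Finset.range i, (θ ^ j) β := by
  simp only [ev, AddMonoidHom.mk'_apply, sgl]
  rw [Finsupp.sum_single_index (by simp)]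

theorem ev_sgl_mul (β : F) (i : ℕ) (c : F) :
    ev θ β (sgl θ i c * (SkewPoly.X θ - SkewPoly.C θ β)) = 0 := by
  rw [mul_sub, X_eq, C_eq, mul_sgl, mul_sgl, map_sub, ev_sgl, ev_sgl,
    Finset.prod_range_succ]
  simp [mul_assoc, mul_comm, mul_left_comm]

theorem ev_mul_X_sub_C (β : F) (q : SkewPoly F θ) :
    ev θ β (q * (SkewPoly.X θ - SkewPoly.C θ β)) = 0 := by
  induction q using Finsupp.induction with
  | zero =>
    show ev θ β ((0 : SkewPoly F θ) * (SkewPoly.X θ - SkewPoly.C θ β)) = 0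
    rw [zero_mul, map_zero]
  | single_add i c q _ _ ih =>
    show ev θ β ((sgl θ i c + (show SkewPoly F θ from q))
        * (SkewPoly.X θ - SkewPoly.C θ β)) = 0
    rw [add_mul, map_add, ih, ev_sgl_mul, add_zero]

end SkewBCHAux

namespace SkewBCHAux

variable {F : Type*} [Field F] (θ : RingAut F)

theorem X_pow_mul_comm {n : ℕ} (hn : ∀ x : F, (θ ^ n) x = x) (p : SkewPoly F θ) :
    SkewPoly.X θ ^ n * p = p * SkewPoly.X θ ^ n := by
  induction p using Finsupp.induction with
  | zero =>
    show SkewPoly.X θ ^ n * (0 : SkewPoly F θ) = (0 : SkewPoly F θ) * SkewPoly.X θ ^ n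
    rw [zero_mul, mul_zero]
  | single_add i c q _ _ ih =>
    show SkewPoly.X θ ^ n * (sgl θ i c + (show SkewPoly F θ from q))
        = (sgl θ i c + (show SkewPoly F θ from q)) * SkewPoly.X θ ^ n
    rw [mul_add, add_mul, ih, X_pow, mul_sgl, mul_sgl, hn, map_one, mul_one, one_mul,
      Nat.add_comm]

theorem central {n : ℕ} (hn : ∀ x : F, (θ ^ n) x = x) (p : SkewPoly F θ) :
    (SkewPoly.X θ ^ n - 1) * p = p * (SkewPoly.X θ ^ n - 1) := by
  rw [sub_mul, mul_sub, one_mul, mul_one, X_pow_mul_comm θ hn]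

theorem exists_of_mem_span_central {R : Type*} [Ring R] {t : R}
    (ht : ∀ p : R, t * p = p * t) {x : R} (hx : x ∈ TwoSidedIdeal.span {t}) :
    ∃ z : R, x = z * t := by
  let J : TwoSidedIdeal R := TwoSidedIdeal.mk' {x | ∃ z, x = z * t}
    ⟨0, (zero_mul t).symm⟩
    (by rintro x y ⟨z₁, rfl⟩ ⟨z₂, rfl⟩; exact ⟨z₁ + z₂, (add_mul _ _ _).symm⟩)
    (by rintro x ⟨z, rfl⟩; exact ⟨-z, (neg_mul _ _).symm⟩)
    (by rintro x y ⟨z, rfl⟩; exact ⟨x * z, (mul_assoc _ _ _).symm⟩)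
    (by rintro x y ⟨z, rfl⟩; exact ⟨z * y, by rw [mul_assoc, ht y, ← mul_assoc]⟩)
  have := TwoSidedIdeal.mem_span_iff.mp hx J
    (Set.singleton_subset_iff.mpr
      ((TwoSidedIdeal.mem_mk' _ _ _ _ _ _ t).mpr ⟨1, (one_mul t).symm⟩))
  rwa [TwoSidedIdeal.mem_mk'] at this

end SkewBCHAux

namespace SkewBCHAux

variable {F : Type*} [Field F] (θ : RingAut F)

theorem aut_mul_apply' (f g : RingAut F) (x : F) : (f * g) x = f (g x) := rfl

theorem theta_eq_frobenius [Fintype F] [DecidableEq F] {n : ℕ} (hn : 0 < n)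
    (hcard : Fintype.card F = 2 ^ n) {α : F} (hα : orderOf α = 2 ^ n - 1)
    (hθ : θ α = α ^ 2) : ∀ x : F, θ x = x ^ 2 := by
  have h2n : 1 < 2 ^ n := Nat.one_lt_two_pow_iff.mpr hn.ne'
  have hα0 : α ≠ 0 := by
    intro h
    have h1 := pow_orderOf_eq_one α
    rw [hα, h, zero_pow (by omega)] at h1
    exact zero_ne_one h1
  set u : Fˣ := Units.mk0 α hα0 with hu
  have huo : orderOf u = Nat.card Fˣ := by
    rw [Nat.card_eq_fintype_card, Fintype.card_units, hcard, ← hα, ← orderOf_units]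
    rfl
  have hgen : ∀ v : Fˣ, v ∈ Subgroup.zpowers u := by
    have : Subgroup.zpowers u = ⊤ :=
      Subgroup.eq_top_of_card_eq _ (by rw [Nat.card_zpowers, huo])
    intro v; rw [this]; trivial
  intro x
  rcases eq_or_ne x 0 with rfl | hx
  · rw [map_zero]; ring
  obtain ⟨m, hm⟩ := hgen (Units.mk0 x hx)
  set φ : Fˣ →* Fˣ := Units.map (θ : F →+* F).toMonoidHom with hφ
  have hφu : φ u = u ^ 2 := by
    ext
    rw [hφ, Units.coe_map]
    simpa [hu] using hθ
  have : φ (Units.mk0 x hx) = (Units.mk0 x hx) ^ 2 := by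
    rw [← hm, map_zpow, hφu, ← zpow_natCast u 2, ← zpow_mul, mul_comm, zpow_mul,
      zpow_natCast]
  calc θ x = ((φ (Units.mk0 x hx) : Fˣ) : F) := by rw [hφ, Units.coe_map]; rfl
  _ = x ^ 2 := by rw [this, Units.val_pow_eq_pow_val]; rfl

theorem theta_pow_apply [Fintype F] [DecidableEq F] {n : ℕ} (hn : 0 < n)
    (hcard : Fintype.card F = 2 ^ n) {α : F} (hα : orderOf α = 2 ^ n - 1)
    (hθ : θ α = α ^ 2) : ∀ (j : ℕ) (x : F), (θ ^ j) x = x ^ 2 ^ j := by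
  have hf := theta_eq_frobenius θ hn hcard hα hθ
  intro j
  induction j with
  | zero => intro x; rw [pow_zero, pow_zero, pow_one]; rfl
  | succ j ih =>
    intro x
    rw [pow_succ', aut_mul_apply', ih x, hf, ← pow_mul, ← pow_succ]

theorem theta_pow_card [Fintype F] [DecidableEq F] {n : ℕ} (hn : 0 < n)
    (hcard : Fintype.card F = 2 ^ n) {α : F} (hα : orderOf α = 2 ^ n - 1)
    (hθ : θ α = α ^ 2) : ∀ x : F, (θ ^ n) x = x := by
  intro x
  rw [theta_pow_apply θ hn hcard hα hθ n x, ← hcard, FiniteField.pow_card]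

end SkewBCHAux

namespace SkewBCHAux

variable {F : Type*} [Field F] (θ : RingAut F)

theorem sum_range_two_pow (i : ℕ) : ∑ j ∈ Finset.range i, 2 ^ j = 2 ^ i - 1 := by
  induction i with
  | zero => simp
  | succ i ih =>
    rw [Finset.sum_range_succ, ih]
    have : 1 ≤ 2 ^ i := Nat.one_le_two_pow
    have : 2 ^ (i + 1) = 2 ^ i + 2 ^ i := by rw [pow_succ]; omega
    omega

theorem alpha_ne_zero {n : ℕ} (hn : 0 < n) {α : F} (hα : orderOf α = 2 ^ n - 1) :
    α ≠ 0 := by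
  have h2n : 1 < 2 ^ n := Nat.one_lt_two_pow_iff.mpr hn.ne'
  intro h
  have h1 := pow_orderOf_eq_one α
  rw [hα, h, zero_pow (by omega)] at h1
  exact zero_ne_one h1

theorem b_injective {n : ℕ} (hn : 0 < n) {α : F} (hα : orderOf α = 2 ^ n - 1) :
    Function.Injective (fun i : Fin n => α ^ (2 ^ (i : ℕ) - 1)) := by
  have hα0 : α ≠ 0 := alpha_ne_zero hn hα
  set u : Fˣ := Units.mk0 α hα0 with hu
  have huo : orderOf u = 2 ^ n - 1 := by rw [← hα, ← orderOf_units]; rfl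
  intro i j hij
  simp only at hij
  have hij' : u ^ (2 ^ (i : ℕ) - 1) = u ^ (2 ^ (j : ℕ) - 1) := by
    ext; rw [Units.val_pow_eq_pow_val, Units.val_pow_eq_pow_val]; exact hij
  rw [pow_eq_pow_iff_modEq, huo] at hij'
  have hij := hij'
  have hi : 2 ^ (i : ℕ) < 2 ^ n := Nat.pow_lt_pow_right one_lt_two i.isLt
  have hj : 2 ^ (j : ℕ) < 2 ^ n := Nat.pow_lt_pow_right one_lt_two j.isLt
  have hi1 : 1 ≤ 2 ^ (i : ℕ) := Nat.one_le_two_pow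
  have hj1 : 1 ≤ 2 ^ (j : ℕ) := Nat.one_le_two_pow
  have heq : 2 ^ (i : ℕ) - 1 = 2 ^ (j : ℕ) - 1 := by
    have h1 := Nat.mod_eq_of_lt (show 2 ^ (i : ℕ) - 1 < 2 ^ n - 1 by omega)
    have h2 := Nat.mod_eq_of_lt (show 2 ^ (j : ℕ) - 1 < 2 ^ n - 1 by omega)
    unfold Nat.ModEq at hij
    omega
  clear hij
  have : 2 ^ (i : ℕ) = 2 ^ (j : ℕ) := by omega
  exact Fin.ext (Nat.pow_right_injective (le_refl 2) this)

theorem ev_wordPoly {n : ℕ} (β : F) (a : Fin n → F) :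
    ev θ β (wordPoly θ a)
      = ∑ i : Fin n, a i * ∏ j ∈ Finset.range (i : ℕ), (θ ^ j) β := by
  rw [wordPoly, map_sum]
  exact Finset.sum_congr rfl fun i _ => by rw [C_mul_X_pow, ev_sgl]

end SkewBCHAux

open SkewBCHAux

/-- (Skew BCH bound.)  Let `n` be even, `F` the field with `2ⁿ`
elements, `α ∈ F` a primitive `(2ⁿ-1)`-th root of unity and `θ` the automorphism with
`θ(α) = α²` (the Frobenius).  Let `𝒞` be the `θ`-cyclic code of length `n` generated
by `G`, a right divisor of `Xⁿ - 1` in `F[X;θ]`, and assume `X - αᵏ` right-divides `G`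
for `k = 1, …, d-1` (a skew BCH code of designed distance `d`, `2 ≤ d ≤ n+1`).  Then
every nonzero codeword of `𝒞` has Hamming weight at least `d`. -/
theorem skew_BCH_minimum_distance_ge_designed_distance
    (F : Type*) [Field F] [Fintype F] [DecidableEq F] (n : ℕ) (hn : 0 < n)
    (hneven : Even n) (hcard : Fintype.card F = 2 ^ n)
    (α : F) (hα : orderOf α = 2 ^ n - 1)
    (θ : RingAut F) (hθ : θ α = α ^ 2)
    (G : SkewPoly F θ) (hG : ∃ Q : SkewPoly F θ, SkewPoly.X θ ^ n - 1 = Q * G)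
    (d : ℕ) (hd2 : 2 ≤ d) (hdn : d ≤ n + 1)
    (hroots : ∀ k, 1 ≤ k → k ≤ d - 1 →
      ∃ Q : SkewPoly F θ, G = Q * (SkewPoly.X θ - SkewPoly.C θ (α ^ k)))
    (a : Fin n → F)
    (ha : (skewCyclicCon F θ n).mk' (wordPoly θ a)
      ∈ Ideal.span {(skewCyclicCon F θ n).mk' G})
    (ha0 : a ≠ 0) :
    d ≤ hammingNorm a := by
  by_contra hcon
  push_neg at hcon
  have hα0 : α ≠ 0 := alpha_ne_zero hn hα
  set b : Fin n → F := fun i => α ^ (2 ^ (i : ℕ) - 1) with hb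
  -- extract a representative: wordPoly a = s * G - z * (Xⁿ - 1)
  obtain ⟨r, hr⟩ := Submodule.mem_span_singleton.mp ha
  have hsur : Function.Surjective ((skewCyclicCon F θ n).mk') :=
    fun y => Quotient.inductionOn' y fun s => ⟨s, rfl⟩
  obtain ⟨s, rfl⟩ := hsur r
  rw [smul_eq_mul, ← map_mul] at hr
  have hrel : (skewCyclicCon F θ n) (s * G) (wordPoly θ a) := Quotient.eq''.mp hr
  have hmem : s * G - wordPoly θ a ∈ TwoSidedIdeal.span {SkewPoly.X θ ^ n - 1} :=
    ((TwoSidedIdeal.span {SkewPoly.X θ ^ n - 1}).rel_iff _ _).mp hrel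
  obtain ⟨z, hz⟩ := exists_of_mem_span_central
    (central θ (theta_pow_card θ hn hcard hα hθ)) hmem
  have hwa : wordPoly θ a = s * G - z * (SkewPoly.X θ ^ n - 1) := by
    rw [← hz]; exact (sub_sub_cancel _ _).symm
  -- the power-sum identities
  have hfrobpow := theta_pow_apply θ hn hcard hα hθ
  have hsum : ∀ k, 1 ≤ k → k ≤ d - 1 → ∑ i : Fin n, a i * (b i) ^ k = 0 := by
    intro k hk1 hk2
    obtain ⟨Qk, hQk⟩ := hroots k hk1 hk2
    obtain ⟨Q, hQ⟩ := hG
    have h0 : ev θ (α ^ k) (wordPoly θ a) = 0 := by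
      rw [hwa, hQ, hQk, sub_eq_add_neg, ← neg_mul]
      erw [show s * (Qk * (SkewPoly.X θ - SkewPoly.C θ (α ^ k)))
            + (-z) * (Q * (Qk * (SkewPoly.X θ - SkewPoly.C θ (α ^ k))))
          = (s * Qk + (-z) * (Q * Qk)) * (SkewPoly.X θ - SkewPoly.C θ (α ^ k)) by
        noncomm_ring]
      exact ev_mul_X_sub_C θ _ _
    rw [ev_wordPoly] at h0
    rw [← h0]
    refine Finset.sum_congr rfl fun i _ => ?_
    congr 1
    calc (b i) ^ k = (α ^ (2 ^ (i : ℕ) - 1)) ^ k := rfl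
      _ = ((α ^ k) ^ (2 ^ (i : ℕ) - 1)) := by
          rw [← pow_mul, mul_comm, pow_mul]
      _ = (α ^ k) ^ (∑ j ∈ Finset.range (i : ℕ), 2 ^ j) := by
          rw [sum_range_two_pow]
      _ = ∏ j ∈ Finset.range (i : ℕ), (α ^ k) ^ 2 ^ j := by
          rw [Finset.prod_pow_eq_pow_sum]
      _ = ∏ j ∈ Finset.range (i : ℕ), (θ ^ j) (α ^ k) := by
          exact Finset.prod_congr rfl fun j _ => (hfrobpow j (α ^ k)).symm
  -- Vandermonde argument
  set S : Finset (Fin n) := Finset.univ.filter (fun i => a i ≠ 0) with hSdef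
  have hS : hammingNorm a = S.card := rfl
  set e : Fin S.card ≃ {x // x ∈ S} := S.equivFin.symm with he
  have hfinj : Function.Injective (fun j : Fin S.card => b ((e j) : Fin n)) := by
    intro j₁ j₂ h
    exact e.injective (Subtype.ext (b_injective hn hα h))
  have hfv : ∀ i : Fin S.card,
      ∑ j : Fin S.card, (a ((e j) : Fin n) * b ((e j) : Fin n))
        * (b ((e j) : Fin n)) ^ (i : ℕ) = 0 := by
    intro i
    have hk := hsum ((i : ℕ) + 1) (by omega)
      (by have h1 : (i : ℕ) < S.card := i.isLt; rw [hS] at hcon; omega)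
    have h1 : ∑ i' ∈ S, a i' * b i' ^ ((i : ℕ) + 1) = 0 := by
      rw [← hk]
      exact Finset.sum_filter_of_ne fun x _ hx => by
        intro h; rw [h, zero_mul] at hx; exact hx rfl
    calc ∑ j : Fin S.card, (a ((e j) : Fin n) * b ((e j) : Fin n))
          * (b ((e j) : Fin n)) ^ (i : ℕ)
        = ∑ j : Fin S.card, a ((e j) : Fin n) * b ((e j) : Fin n) ^ ((i : ℕ) + 1) := by
          exact Finset.sum_congr rfl fun j _ => by ring
      _ = ∑ x : {x // x ∈ S}, a (x : Fin n) * b (x : Fin n) ^ ((i : ℕ) + 1) :=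
          Fintype.sum_equiv e _ _ (fun j => rfl)
      _ = ∑ i' ∈ S, a i' * b i' ^ ((i : ℕ) + 1) := Finset.sum_coe_sort S (fun i' => a i' * b i' ^ ((i : ℕ) + 1))
      _ = 0 := h1
  have hv0 := Matrix.eq_zero_of_forall_pow_sum_mul_pow_eq_zero hfinj hfv
  obtain ⟨i, hi⟩ := Function.ne_iff.mp ha0
  have hiS : i ∈ S := Finset.mem_filter.mpr ⟨Finset.mem_univ i, hi⟩
  have hji := congrFun hv0 (e.symm ⟨i, hiS⟩)
  rw [Equiv.apply_symm_apply] at hji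
  simp only [Pi.zero_apply] at hji
  have hb0 : b i ≠ 0 := pow_ne_zero _ hα0
  exact hi (by
    rcases mul_eq_zero.mp hji with h | h
    · exact h
    · exact absurd h hb0)
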